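/- If every point of Γ is a quasi-periodic point of φ (i.e. W(φ) = ∅), then the generalized shift dynamical system (X^Γ, σ_φ) is not sensitive: for every ε > 0 and every x ∈ X^Γ there exists an open neighborhood U of x such that D(σ_φ^n(x), σ_φ^n(y)) < ε for all y ∈ U and all n ≥ 0. -/

import Mathlib

/-!
Every point of `Γ` has a finite forward orbit, so for each `N` the union `F` of the orbits of
`e 0, …, e (N - 1)` is finite. The coordinates `e k`, `k < N`, of `σ_φ^n y` are values of `y`
on `F`, so on the open set of those `y` that agree with `x` on `F` we get
`D(σ_φ^n x, σ_φ^n y) ≤ 2^{-N}` for every `n`.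
-/

open Filter Topology

open scoped Classical in
/-- The metric `D` on `X^Γ`, via a fixed bijection `e : ℕ ≃ Γ`. -/
noncomputable def gsD {X Γ : Type*} (e : ℕ ≃ Γ) (x y : Γ → X) : ℝ :=
  ∑' n : ℕ, (if x (e n) = y (e n) then (0 : ℝ) else 1) / 2 ^ (n + 1)

/-- The generalized shift `σ_φ`. -/
def gshift {X Γ : Type*} (φ : Γ → Γ) : (Γ → X) → (Γ → X) := fun x => x ∘ φ

/-- `(x, y)` is a scrambled pair of `f` with respect to the distance function `d`. -/
def scrambledPair {Z : Type*} (d : Z → Z → ℝ) (f : Z → Z) (x y : Z) : Prop :=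
  liminf (fun n : ℕ => d (f^[n] x) (f^[n] y)) atTop = 0 ∧
    0 < limsup (fun n : ℕ => d (f^[n] x) (f^[n] y)) atTop

lemma gshift_iterate {X Γ : Type*} (φ : Γ → Γ) (n : ℕ) (x : Γ → X) :
    (gshift φ)^[n] x = x ∘ φ^[n] := by
  induction n generalizing x with
  | zero => rfl
  | succ n ih => rw [Function.iterate_succ_apply', ih, Function.iterate_succ]; rfl

lemma Function.finite_range_iterate_of_iterate_eq {α : Type*} {f : α → α} {a : α}
    {m n : ℕ} (hmn : m < n) (h : f^[n] a = f^[m] a) : (Set.range fun k => f^[k] a).Finite := by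
  refine (Set.finite_Iio n).image (fun k => f^[k] a) |>.subset ?_
  rintro _ ⟨k, rfl⟩
  induction k using Nat.strong_induction_on with
  | _ k ih =>
    rcases lt_or_ge k n with hk | hk
    · exact ⟨k, hk, rfl⟩
    · have hshift : f^[k] a = f^[k - n + m] a := by
        rw [← Nat.sub_add_cancel hk, Function.iterate_add_apply, h,
          ← Function.iterate_add_apply, Nat.add_sub_cancel]
      show f^[k] a ∈ _
      rw [hshift]
      exact ih _ (by omega)

open scoped Classical in
lemma gsD_le_of_forall_lt_eq {X Γ : Type*} (e : ℕ ≃ Γ) {x y : Γ → X} {N : ℕ}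
    (h : ∀ k < N, x (e k) = y (e k)) : gsD e x y ≤ (1 / 2) ^ N := by
  set d : ℕ → ℝ := fun n => (if x (e n) = y (e n) then (0 : ℝ) else 1) / 2 ^ (n + 1)
  have hd_nonneg (n : ℕ) : 0 ≤ d n := by positivity
  have hd_le (n : ℕ) : d n ≤ 1 / 2 / 2 ^ n := by
    rw [div_div, ← pow_succ']
    unfold d
    split_ifs <;> norm_num
  have hd : Summable d :=
    (summable_geometric_two' 1).of_nonneg_of_le hd_nonneg hd_le
  have hd_shift_le (n : ℕ) : d (n + N) ≤ (1 / 2) ^ N / 2 / 2 ^ n := by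
    refine (hd_le (n + N)).trans_eq ?_
    rw [pow_add, one_div_pow]
    field_simp
  calc gsD e x y = ∑ k ∈ Finset.range N, d k + ∑' n, d (n + N) :=
        (hd.sum_add_tsum_nat_add N).symm
    _ = ∑' n, d (n + N) := by
        rw [Finset.sum_eq_zero fun k hk => by simp [d, h k (Finset.mem_range.mp hk)], zero_add]
    _ ≤ ∑' n : ℕ, (1 / 2) ^ N / 2 / 2 ^ n :=
        (hd.comp_injective (add_left_injective N)).tsum_le_tsum hd_shift_le
          (summable_geometric_two' _)
    _ = (1 / 2) ^ N := tsum_geometric_two' _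

theorem stmt11_general {X Γ : Type*} [TopologicalSpace X] [DiscreteTopology X] (e : ℕ ≃ Γ)
    (φ : Γ → Γ) (hφ : ∀ a : Γ, ∃ n m : ℕ, 1 ≤ m ∧ m < n ∧ φ^[n] a = φ^[m] a) :
    ∀ ε > (0 : ℝ), ∀ x : Γ → X, ∃ U : Set (Γ → X), IsOpen U ∧ x ∈ U ∧
      ∀ y ∈ U, ∀ n : ℕ, gsD e ((gshift φ)^[n] x) ((gshift φ)^[n] y) < ε := by
  intro ε hε x
  obtain ⟨N, hN⟩ := exists_pow_lt_of_lt_one hε one_half_lt_one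
  set F := ⋃ k : Fin N, Set.range fun i => φ^[i] (e k)
  have hF : F.Finite := Set.finite_iUnion fun k => by
    obtain ⟨n, m, -, hmn, h⟩ := hφ (e k)
    exact Function.finite_range_iterate_of_iterate_eq hmn h
  refine ⟨F.pi fun γ => {x γ}, isOpen_set_pi hF fun _ _ => isOpen_discrete _,
    fun _ _ => rfl, fun y hy n => (gsD_le_of_forall_lt_eq e fun k hk => ?_).trans_lt hN⟩
  have hmem : φ^[n] (e k) ∈ F := Set.mem_iUnion.mpr ⟨⟨k, hk⟩, n, rfl⟩
  rw [gshift_iterate, gshift_iterate]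
  exact (hy _ hmem).symm

/-- If every point of `Γ` is a quasi-periodic point of `φ`, then
`(X^Γ, σ_φ)` is not sensitive: for every `ε > 0` and every `x ∈ X^Γ` there exists an
open neighborhood `U` of `x` with `D(σ_φ^n x, σ_φ^n y) < ε` for all `y ∈ U`, `n ≥ 0`. -/
theorem stmt11 {X Γ : Type*} [TopologicalSpace X] [DiscreteTopology X] [Finite X]
    [Nontrivial X] [Countable Γ] [Infinite Γ] (e : ℕ ≃ Γ) (φ : Γ → Γ)
    (hφ : ∀ a : Γ, ∃ n m : ℕ, 1 ≤ m ∧ m < n ∧ φ^[n] a = φ^[m] a) :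
    ∀ ε > (0 : ℝ), ∀ x : Γ → X, ∃ U : Set (Γ → X), IsOpen U ∧ x ∈ U ∧
      ∀ y ∈ U, ∀ n : ℕ, gsD e ((gshift φ)^[n] x) ((gshift φ)^[n] y) < ε :=
  stmt11_general e φ hφ
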